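/- arXiv:1509.07373 — 4 statements merged into one kernel-verified Lean document; each statement's English description precedes it below -/
import Mathlib

section
/- Suppose ∑_{j∈J} γ_j < ∞ and C_j < ∞ for every j. Then for every φ ∈ D(S) and every j ∈ J one has |Ψ_j(φ)| ≤ 2 C_j and |Ξ_j(φ)| ≤ 4 (3|E̲| + ∑_{l∈J} γ_l + 2η_{j,0} + 2γ_j) C_j. In particular, each component Ξ_j is a bounded function on D(S). -/
/-!
Since `μ_l` and `μ_j` lie in disjoint gaps, `|μ_l - μ_j|` is at least the distance from `μ_j` to
the nearer endpoint of the `l`-th gap, so the `l`-th factor of `Ψ_j` is at most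
`(E_l^+ - μ_j) / (E_l^- - μ_j) = 1 + γ_l / (E_l^- - μ_j) ≤ 1 + γ_l / η_{j,l}` (or its mirror image).
Comparing products factor by factor and using `μ_j - E̲ ≤ η_{j,0} + γ_j` gives `|Ψ_j| ≤ 2 C_j`.
Each summand of `Q_1` is bounded by `γ_l` in absolute value, which bounds the prefactor of `Ξ_j`.
-/

open scoped Real BigOperators
open Real

noncomputable section

/-- Distance between the gaps indexed by `j` and `l`
(equals `dist ([Em j, Ep j], [Em l, Ep l])` when these closed intervals are disjoint). -/
def gapDist {J : Type*} (Em Ep : J → ℝ) (j l : J) : ℝ :=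
  max (Em l - Ep j) (Em j - Ep l)

/-- Length `γ_j = E_j^+ - E_j^-` of the `j`-th gap. -/
def gapLen {J : Type*} (Em Ep : J → ℝ) (j : J) : ℝ := Ep j - Em j

/-- Craig's constant `C_j = (η_{j,0} + γ_j)^{1/2} ∏_{l ≠ j} (1 + γ_l/η_{j,l})^{1/2}`. -/
def CraigC {J : Type*} (Em Ep : J → ℝ) (E0 : ℝ) (j : J) : ℝ :=
  Real.sqrt ((Em j - E0) + gapLen Em Ep j) *
    ∏' l : {l : J // l ≠ j}, Real.sqrt (1 + gapLen Em Ep l / gapDist Em Ep j l)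

/-- `μ_j(φ) = E_j^- + γ_j cos²(φ_j/2) = E_j^- + γ_j (1 + cos φ_j)/2`. -/
def muD {J : Type*} (Em Ep : J → ℝ) (φ : J → Real.Angle) (j : J) : ℝ :=
  Em j + gapLen Em Ep j * ((1 + Real.Angle.cos (φ j)) / 2)

/-- `Q_1(φ) = E̲ + ∑_j (E_j^- + E_j^+ - 2 μ_j)`. -/
def Q1D {J : Type*} (Em Ep : J → ℝ) (E0 : ℝ) (φ : J → Real.Angle) : ℝ :=
  E0 + ∑' j : J, (Em j + Ep j - 2 * muD Em Ep φ j)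

/-- `Ψ_j(φ) = 2 ((μ_j - E̲) ∏_{l≠j} (E_l^- - μ_j)(E_l^+ - μ_j)/(μ_l - μ_j)²)^{1/2}`. -/
def PsiD {J : Type*} (Em Ep : J → ℝ) (E0 : ℝ) (φ : J → Real.Angle) (j : J) : ℝ :=
  2 * Real.sqrt ((muD Em Ep φ j - E0) *
    ∏' l : {l : J // l ≠ j},
      ((Em l - muD Em Ep φ j) * (Ep l - muD Em Ep φ j) /
        (muD Em Ep φ l - muD Em Ep φ j) ^ 2))

/-- `Ξ_j(φ) = -2 (Q_1(φ) + 2 μ_j) Ψ_j(φ)`. -/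
def XiD {J : Type*} (Em Ep : J → ℝ) (E0 : ℝ) (φ : J → Real.Angle) (j : J) : ℝ :=
  -2 * (Q1D Em Ep E0 φ + 2 * muD Em Ep φ j) * PsiD Em Ep E0 φ j

section OrderedSemiringProducts

variable {ι R : Type*} [CommSemiring R] [PartialOrder R] [IsOrderedRing R] [TopologicalSpace R]
  [OrderClosedTopology R] {f g : ι → R}

theorem one_le_tprod₀ (hg : ∀ i, 1 ≤ g i) : 1 ≤ ∏' i, g i := by
  by_cases hm : Multipliable g
  · exact le_hasProd_of_le_prod hm.hasProd fun s => Finset.one_le_prod fun i _ => hg i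
  · rw [tprod_eq_one_of_not_multipliable hm]

theorem Multipliable.prod_le_tprod_of_one_le (hm : Multipliable g) (hg : ∀ i, 1 ≤ g i)
    (s : Finset ι) : ∏ i ∈ s, g i ≤ ∏' i, g i :=
  ge_of_tendsto hm.hasProd <| Filter.eventually_atTop.2 ⟨s, fun _ hst =>
    Finset.prod_le_prod_of_subset_of_one_le hst (fun i _ => zero_le_one.trans (hg i))
      fun i _ _ => hg i⟩

theorem tprod_le_tprod_of_nonneg_of_one_le (hf : ∀ i, 0 ≤ f i) (hfg : ∀ i, f i ≤ g i)
    (hg : ∀ i, 1 ≤ g i) (hm : Multipliable g) : ∏' i, f i ≤ ∏' i, g i :=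
  tprod_le_of_prod_le' (one_le_tprod₀ hg) fun s =>
    (Finset.prod_le_prod (fun i _ => hf i) fun i _ => hfg i).trans
      (hm.prod_le_tprod_of_one_le hg s)

end OrderedSemiringProducts

theorem Multipliable.hasProd_sq_tprod_sqrt {ι : Type*} {g : ι → ℝ}
    (hm : Multipliable fun i => √(g i)) (hg : ∀ i, 0 ≤ g i) :
    HasProd g ((∏' i, √(g i)) ^ 2) := by
  convert hm.hasProd.pow 2 using 1
  exact funext fun i => (sq_sqrt (hg i)).symm

theorem Real.Angle.cos_mem_Icc (θ : Real.Angle) : θ.cos ∈ Set.Icc (-1) 1 := by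
  induction θ using Real.Angle.induction_on with
  | h x => rw [Real.Angle.cos_coe]; exact ⟨neg_one_le_cos x, cos_le_one x⟩

theorem div_sq_le_one_add_div_of_lt {x y a b η : ℝ} (hη : 0 < η) (hxa : η ≤ a - x)
    (hay : a ≤ y) (hab : a ≤ b) : (a - x) * (b - x) / (y - x) ^ 2 ≤ 1 + (b - a) / η := by
  have hax : 0 < a - x := hη.trans_le hxa
  calc (a - x) * (b - x) / (y - x) ^ 2 ≤ (a - x) * (b - x) / (a - x) ^ 2 :=
        div_le_div_of_nonneg_left (by nlinarith) (by positivity) (by nlinarith)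
    _ = 1 + (b - a) / (a - x) := by field_simp; ring
    _ ≤ 1 + (b - a) / η := by gcongr

theorem gap_factor_mem {x y a b c d : ℝ} (hx : x ∈ Set.Icc c d) (hy : y ∈ Set.Icc a b)
    (hdist : 0 < max (a - d) (c - b)) :
    0 ≤ (a - x) * (b - x) / (y - x) ^ 2 ∧
      (a - x) * (b - x) / (y - x) ^ 2 ≤ 1 + (b - a) / max (a - d) (c - b) := by
  obtain ⟨hcx, hxd⟩ := hx
  obtain ⟨hay, hyb⟩ := hy
  rcases le_total (a - d) (c - b) with hle | hle
  · rw [max_eq_right hle] at hdist ⊢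
    -- `[a, b]` lies left of `[c, d]`: reflect through the origin.
    have key := div_sq_le_one_add_div_of_lt (x := -x) (y := -y) (a := -b) (b := -a) hdist
      (by linarith) (by linarith) (by linarith)
    refine ⟨div_nonneg (mul_nonneg_of_nonpos_of_nonpos (by linarith) (by linarith))
      (sq_nonneg _), ?_⟩
    convert key using 2 <;> ring
  · rw [max_eq_left hle] at hdist ⊢
    exact ⟨div_nonneg (mul_nonneg (by linarith) (by linarith)) (sq_nonneg _),
      div_sq_le_one_add_div_of_lt hdist (by linarith) hay (by linarith)⟩

section Gaps

variable {J : Type*} {Em Ep : J → ℝ} {E0 : ℝ}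

theorem muD_mem_Icc (hle : ∀ l, Em l ≤ Ep l) (φ : J → Real.Angle) (j : J) :
    muD Em Ep φ j ∈ Set.Icc (Em j) (Ep j) := by
  obtain ⟨hcos₁, hcos₂⟩ := (φ j).cos_mem_Icc
  have hγ : 0 ≤ gapLen Em Ep j := sub_nonneg.2 (hle j)
  constructor
  · unfold muD; nlinarith
  · unfold muD gapLen at *; nlinarith

theorem abs_PsiD_le (hle : ∀ l, Em l ≤ Ep l) {j : J} (hE0 : E0 ≤ Em j)
    (hsep : ∀ l, j ≠ l → 0 < gapDist Em Ep j l)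
    (hCfin : Multipliable fun l : {l : J // l ≠ j} =>
      √(1 + gapLen Em Ep l / gapDist Em Ep j l))
    (φ : J → Real.Angle) :
    |PsiD Em Ep E0 φ j| ≤ 2 * CraigC Em Ep E0 j := by
  set Q := ∏' l : {l : J // l ≠ j}, √(1 + gapLen Em Ep l / gapDist Em Ep j l)
  have hg : ∀ l : {l : J // l ≠ j}, 1 ≤ 1 + gapLen Em Ep l / gapDist Em Ep j l := fun l =>
    le_add_of_nonneg_right (div_nonneg (sub_nonneg.2 (hle l)) (hsep l (Ne.symm l.2)).le)
  have hQsq := hCfin.hasProd_sq_tprod_sqrt fun l => zero_le_one.trans (hg l)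
  have hfactor (l : {l : J // l ≠ j}) := gap_factor_mem (muD_mem_Icc hle φ j)
    (muD_mem_Icc hle φ l) (hsep l (Ne.symm l.2))
  have hprod : ∏' l : {l : J // l ≠ j}, (Em l - muD Em Ep φ j) * (Ep l - muD Em Ep φ j) /
      (muD Em Ep φ l - muD Em Ep φ j) ^ 2 ≤ Q ^ 2 := by
    rw [← hQsq.tprod_eq]
    exact tprod_le_tprod_of_nonneg_of_one_le (fun l => (hfactor l).1) (fun l => (hfactor l).2)
      hg hQsq.multipliable
  have hμ := muD_mem_Icc hle φ j
  have ha : 0 ≤ Em j - E0 + gapLen Em Ep j := by unfold gapLen; linarith [hle j]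
  have hQ : 0 ≤ Q := tprod_nonneg fun _ => sqrt_nonneg _
  have hradicand := mul_le_mul (by unfold gapLen; linarith [hμ.2] : muD Em Ep φ j - E0 ≤ _) hprod
    (tprod_nonneg fun l => (hfactor l).1) ha
  calc |PsiD Em Ep E0 φ j| = PsiD Em Ep E0 φ j := abs_of_nonneg (by unfold PsiD; positivity)
    _ ≤ 2 * √((Em j - E0 + gapLen Em Ep j) * Q ^ 2) := by unfold PsiD; gcongr
    _ = 2 * CraigC Em Ep E0 j := by rw [sqrt_mul ha, sqrt_sq hQ]; rfl

theorem abs_Q1D_add_two_muD_le (hle : ∀ l, Em l ≤ Ep l) {j : J} (hE0 : E0 ≤ Em j)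
    (hsum : Summable (gapLen Em Ep)) (φ : J → Real.Angle) :
    |Q1D Em Ep E0 φ + 2 * muD Em Ep φ j| ≤
      3 * |E0| + (∑' l, gapLen Em Ep l) + 2 * (Em j - E0) + 2 * gapLen Em Ep j := by
  have hterm (l : J) : ‖Em l + Ep l - 2 * muD Em Ep φ l‖ ≤ gapLen Em Ep l := by
    have := muD_mem_Icc hle φ l
    unfold gapLen
    exact abs_le.2 ⟨by linarith [this.2], by linarith [this.1]⟩
  have hsum_le := abs_le.1 (tsum_of_norm_bounded hsum.hasSum hterm)
  have hμ := muD_mem_Icc hle φ j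
  have hγ : gapLen Em Ep j = Ep j - Em j := rfl
  unfold Q1D
  exact abs_le.2 ⟨by linarith [neg_abs_le E0, hμ.1, hsum_le.1, hle j],
    by linarith [le_abs_self E0, hμ.2, hsum_le.2]⟩

end Gaps

theorem psi_xi_bounded_general
    {J : Type*} (Em Ep : J → ℝ) (E0 : ℝ)
    (hlt : ∀ j, Em j < Ep j) (hE0 : ∀ j, E0 < Em j)
    (hsep : ∀ j l : J, j ≠ l → 0 < gapDist Em Ep j l)
    (hsum : Summable fun j => gapLen Em Ep j)
    (hCfin : ∀ j, Multipliable fun l : {l : J // l ≠ j} =>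
      Real.sqrt (1 + gapLen Em Ep l / gapDist Em Ep j l)) :
    ∀ (φ : J → Real.Angle) (j : J),
      |PsiD Em Ep E0 φ j| ≤ 2 * CraigC Em Ep E0 j ∧
      |XiD Em Ep E0 φ j| ≤
        4 * (3 * |E0| + (∑' l : J, gapLen Em Ep l) + 2 * (Em j - E0) + 2 * gapLen Em Ep j) *
          CraigC Em Ep E0 j := by
  intro φ j
  have hle : ∀ l, Em l ≤ Ep l := fun l => (hlt l).le
  have hPsi := abs_PsiD_le hle (hE0 j).le (hsep j) (hCfin j) φ
  have hQ1 := abs_Q1D_add_two_muD_le hle (hE0 j).le hsum φ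
  refine ⟨hPsi, ?_⟩
  calc |XiD Em Ep E0 φ j|
      = 2 * |Q1D Em Ep E0 φ + 2 * muD Em Ep φ j| * |PsiD Em Ep E0 φ j| := by
        simp only [XiD, abs_mul, abs_neg, abs_two]
    _ ≤ 2 * (3 * |E0| + (∑' l : J, gapLen Em Ep l) + 2 * (Em j - E0) + 2 * gapLen Em Ep j) *
          (2 * CraigC Em Ep E0 j) := by
        have := (abs_nonneg _).trans hQ1
        gcongr
    _ = 4 * (3 * |E0| + (∑' l : J, gapLen Em Ep l) + 2 * (Em j - E0) + 2 * gapLen Em Ep j) *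
          CraigC Em Ep E0 j := by ring

/-- Componentwise bounds: `|Ψ_j(φ)| ≤ 2 C_j` and
`|Ξ_j(φ)| ≤ 4 (3|E̲| + ∑_l γ_l + 2 η_{j,0} + 2 γ_j) C_j`, so each `Ξ_j` is bounded on `D(S)`. -/
theorem psi_xi_bounded
    {J : Type*} [Countable J] (Em Ep : J → ℝ) (E0 : ℝ)
    (hlt : ∀ j, Em j < Ep j) (hE0 : ∀ j, E0 < Em j)
    (hsep : ∀ j l : J, j ≠ l → 0 < gapDist Em Ep j l)
    (hsum : Summable fun j => gapLen Em Ep j)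
    (hCfin : ∀ j, Multipliable fun l : {l : J // l ≠ j} =>
      Real.sqrt (1 + gapLen Em Ep l / gapDist Em Ep j l)) :
    ∀ (φ : J → Real.Angle) (j : J),
      |PsiD Em Ep E0 φ j| ≤ 2 * CraigC Em Ep E0 j ∧
      |XiD Em Ep E0 φ j| ≤
        4 * (3 * |E0| + (∑' l : J, gapLen Em Ep l) + 2 * (Em j - E0) + 2 * gapLen Em Ep j) *
          CraigC Em Ep E0 j :=
  psi_xi_bounded_general Em Ep E0 hlt hE0 hsep hsum hCfin
end
end

section
/- Assume ∑_{j∈J} (1 + η_{j,0}²) γ_j < ∞. Then for each k ∈ {1, 2, 3}, the series defining Q_k(φ) = E̲^k + ∑_{j∈J} ((E_j^-)^k + (E_j^+)^k − 2 μ_j(φ)^k) converges absolutely, uniformly in φ ∈ D(S), and Q_k : D(S) → ℝ is a continuous function with respect to the product topology on D(S). -/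
open scoped Real BigOperators
open Real

noncomputable section

lemma angle_cos_mem (θ : Real.Angle) : -1 ≤ θ.cos ∧ θ.cos ≤ 1 := by
  induction θ using Real.Angle.induction_on with
  | h x => rw [Real.Angle.cos_coe]; exact ⟨Real.neg_one_le_cos x, Real.cos_le_one x⟩

lemma key_bound (a b m E0 C : ℝ) (hab : a < b) (hE0 : E0 < a) (hm : a ≤ m ∧ m ≤ b)
    (hC : b - a ≤ C) (k : ℕ) (hk : k = 1 ∨ k = 2 ∨ k = 3) :
    |a ^ k + b ^ k - 2 * m ^ k| ≤
      6 * (1 + 3 * (E0 ^ 2 + (a - E0) ^ 2 + C ^ 2)) * (b - a) := by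
  obtain ⟨hm1, hm2⟩ := hm
  have hγ : (0:ℝ) ≤ b - a := by linarith
  have hη : (0:ℝ) ≤ a - E0 := by linarith
  have hCpos : (0:ℝ) ≤ C := le_trans hγ hC
  set M : ℝ := |E0| + (a - E0) + C with hMdef
  have hM0 : 0 ≤ M := by positivity
  have hMa : |a| ≤ M := by
    rw [abs_le]; constructor
    · have := neg_abs_le E0; linarith
    · have := le_abs_self E0; linarith
  have hMb : |b| ≤ M := by
    rw [abs_le]; constructor
    · have := (abs_le.1 hMa).1; linarith
    · have := le_abs_self E0; linarith
  have key : ∀ x : ℝ, a ≤ x → x ≤ b → |x ^ k - m ^ k| ≤ 3 * (1 + M ^ 2) * (b - a) := by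
    intro x hx1 hx2
    have hMx : |x| ≤ M := by
      rw [abs_le]; constructor
      · have := (abs_le.1 hMa).1; linarith
      · have := (abs_le.1 hMb).2; linarith
    have hMm : |m| ≤ M := by
      rw [abs_le]; constructor
      · have := (abs_le.1 hMa).1; linarith
      · have := (abs_le.1 hMb).2; linarith
    have hxm : |x - m| ≤ b - a := by rw [abs_le]; constructor <;> linarith
    rcases hk with rfl | rfl | rfl
    · simp only [pow_one]
      calc |x - m| ≤ b - a := hxm
        _ ≤ 3 * (1 + M ^ 2) * (b - a) := by nlinarith [sq_nonneg M]
    · have h : x ^ 2 - m ^ 2 = (x + m) * (x - m) := by ring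
      rw [h, abs_mul]
      have h1 : |x + m| ≤ 2 * M := by
        calc |x + m| ≤ |x| + |m| := abs_add_le _ _
          _ ≤ 2 * M := by linarith
      calc |x + m| * |x - m| ≤ (2 * M) * (b - a) :=
            mul_le_mul h1 hxm (abs_nonneg _) (by positivity)
        _ ≤ 3 * (1 + M ^ 2) * (b - a) := by nlinarith [sq_nonneg (M - 1)]
    · have h : x ^ 3 - m ^ 3 = (x ^ 2 + x * m + m ^ 2) * (x - m) := by ring
      rw [h, abs_mul]
      have h1 : |x ^ 2 + x * m + m ^ 2| ≤ 3 * M ^ 2 := by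
        calc |x ^ 2 + x * m + m ^ 2| ≤ |x ^ 2| + |x * m| + |m ^ 2| := abs_add_three _ _ _
          _ = |x| ^ 2 + |x| * |m| + |m| ^ 2 := by rw [abs_mul, ← abs_pow, ← abs_pow]
          _ ≤ M ^ 2 + M * M + M ^ 2 := by gcongr
          _ = 3 * M ^ 2 := by ring
      calc |x ^ 2 + x * m + m ^ 2| * |x - m| ≤ (3 * M ^ 2) * (b - a) :=
            mul_le_mul h1 hxm (abs_nonneg _) (by positivity)
        _ ≤ 3 * (1 + M ^ 2) * (b - a) := by nlinarith [sq_nonneg M]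
  have hsplit : |a ^ k + b ^ k - 2 * m ^ k| ≤ |a ^ k - m ^ k| + |b ^ k - m ^ k| := by
    have : a ^ k + b ^ k - 2 * m ^ k = (a ^ k - m ^ k) + (b ^ k - m ^ k) := by ring
    rw [this]; exact abs_add_le _ _
  have hM2 : M ^ 2 ≤ 3 * (E0 ^ 2 + (a - E0) ^ 2 + C ^ 2) := by
    have h := sq_abs E0
    nlinarith [sq_nonneg (|E0| - (a - E0)), sq_nonneg (|E0| - C), sq_nonneg ((a - E0) - C)]
  calc |a ^ k + b ^ k - 2 * m ^ k| ≤ |a ^ k - m ^ k| + |b ^ k - m ^ k| := hsplit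
    _ ≤ 3 * (1 + M ^ 2) * (b - a) + 3 * (1 + M ^ 2) * (b - a) :=
        add_le_add (key a le_rfl hab.le) (key b hab.le le_rfl)
    _ = 6 * (1 + M ^ 2) * (b - a) := by ring
    _ ≤ 6 * (1 + 3 * (E0 ^ 2 + (a - E0) ^ 2 + C ^ 2)) * (b - a) := by nlinarith

/-- Under the trace condition `∑_j (1 + η_{j,0}²) γ_j < ∞`, for `k ∈ {1,2,3}` the series
`Q_k(φ) = E̲^k + ∑_j ((E_j^-)^k + (E_j^+)^k - 2 μ_j(φ)^k)` converges absolutely, uniformly in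
`φ ∈ D(S)` (Weierstrass M-test bound), and `Q_k` is continuous on `D(S) = ∏_j 𝕋` with the
product topology. -/
theorem Qk_continuous
    {J : Type*} [Countable J] (Em Ep : J → ℝ) (E0 : ℝ)
    (hlt : ∀ j, Em j < Ep j) (hE0 : ∀ j, E0 < Em j)
    (htrace : Summable fun j => (1 + (Em j - E0) ^ 2) * gapLen Em Ep j) :
    ∀ k : ℕ, k ∈ ({1, 2, 3} : Set ℕ) →
      (∃ g : J → ℝ, Summable g ∧
        ∀ (φ : J → Real.Angle) (j : J),
          |(Em j) ^ k + (Ep j) ^ k - 2 * (muD Em Ep φ j) ^ k| ≤ g j) ∧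
      (∀ φ : J → Real.Angle,
        Summable fun j => |(Em j) ^ k + (Ep j) ^ k - 2 * (muD Em Ep φ j) ^ k|) ∧
      Continuous (fun φ : J → Real.Angle =>
        E0 ^ k + ∑' j : J, ((Em j) ^ k + (Ep j) ^ k - 2 * (muD Em Ep φ j) ^ k)) := by
  have hγpos : ∀ j, 0 ≤ gapLen Em Ep j := fun j => by
    have := hlt j; simp [gapLen]; linarith
  have hγsum : Summable fun j => gapLen Em Ep j := by
    apply Summable.of_nonneg_of_le hγpos _ htrace
    intro j
    nlinarith [hγpos j, sq_nonneg (Em j - E0)]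
  have hη2γsum : Summable fun j => (Em j - E0) ^ 2 * gapLen Em Ep j := by
    apply Summable.of_nonneg_of_le (fun j => mul_nonneg (sq_nonneg _) (hγpos j)) _ htrace
    intro j
    nlinarith [hγpos j]
  set C : ℝ := ∑' j, gapLen Em Ep j with hCdef
  have hCle : ∀ j, gapLen Em Ep j ≤ C := fun j =>
    Summable.le_tsum hγsum j (fun i _ => hγpos i)
  set g : J → ℝ := fun j => 6 * (1 + 3 * (E0 ^ 2 + (Em j - E0) ^ 2 + C ^ 2)) * gapLen Em Ep j
    with hgdef
  have hgsum : Summable g := by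
    have h1 : Summable fun j => (6 * (1 + 3 * E0 ^ 2 + 3 * C ^ 2)) * gapLen Em Ep j :=
      hγsum.mul_left _
    have h2 : Summable fun j => 18 * ((Em j - E0) ^ 2 * gapLen Em Ep j) :=
      hη2γsum.mul_left _
    exact (h1.add h2).congr (fun j => by simp [hgdef]; ring)
  have hmu : ∀ (φ : J → Real.Angle) (j : J), Em j ≤ muD Em Ep φ j ∧ muD Em Ep φ j ≤ Ep j := by
    intro φ j
    obtain ⟨h1, h2⟩ := angle_cos_mem (φ j)
    have hγ := hγpos j
    constructor
    · simp only [muD]; nlinarith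
    · simp only [muD, gapLen] at *; nlinarith
  have hbound : ∀ (k : ℕ), (k = 1 ∨ k = 2 ∨ k = 3) →
      ∀ (φ : J → Real.Angle) (j : J),
        |(Em j) ^ k + (Ep j) ^ k - 2 * (muD Em Ep φ j) ^ k| ≤ g j := by
    intro k hk φ j
    exact key_bound (Em j) (Ep j) (muD Em Ep φ j) E0 C (hlt j) (hE0 j) (hmu φ j)
      (hCle j) k hk
  intro k hk
  have hk' : k = 1 ∨ k = 2 ∨ k = 3 := by simpa using hk
  refine ⟨⟨g, hgsum, hbound k hk'⟩, ?_, ?_⟩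
  · intro φ
    exact Summable.of_nonneg_of_le (fun j => abs_nonneg _)
      (fun j => hbound k hk' φ j) hgsum
  · apply Continuous.add continuous_const
    apply continuous_tsum
    · intro j
      have hc : Continuous fun φ : J → Real.Angle => muD Em Ep φ j := by
        apply Continuous.add continuous_const
        exact continuous_const.mul
          ((continuous_const.add (Real.Angle.continuous_cos.comp (continuous_apply j))).div_const 2)
      fun_prop
    · exact hgsum
    · intro j φ
      simpa [Real.norm_eq_abs] using hbound k hk' φ j
end
end

section
/- Let f, g : ℝ → ℝ with f continuous and g continuous, and suppose that at every τ ∈ ℝ with f(τ) ∉ πℤ, f is differentiable at τ with f'(τ) = g(τ). Then for all real a ≤ b: (i) |f(b) − f(a)| ≤ ∫_a^b |g(τ)| dτ; and (ii) if moreover g(τ) ≥ 0 for all τ ∈ (a, b), then 0 ≤ f(b) − f(a) ≤ ∫_a^b g(τ) dτ. -/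
/-!
Flatten the identity near `πℤ`: with `w_n` a continuous cutoff in `[0, 1]` that vanishes on a
neighbourhood of `πℤ` and tends to `1` off `πℤ`, the primitive `ψ_n` of `w_n` is constant near each
`kπ`, so `ψ_n ∘ f` is differentiable everywhere with derivative `w_n(f) g`, even where `f` is not.
Hence `ψ_n (f b) - ψ_n (f a) = ∫_a^b w_n(f) g`, which obeys all the claimed bounds because
`0 ≤ w_n ≤ 1`. Since `πℤ` is null, `ψ_n y → y` by dominated convergence, and the bounds pass to the
limit.
-/

open scoped Real
open Real MeasureTheory Filter Topology Set Metric

theorem eventuallyEq_const_of_eventually_hasDerivAt_zero {φ : ℝ → ℝ} {y : ℝ}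
    (h : ∀ᶠ z in 𝓝 y, HasDerivAt φ 0 z) : φ =ᶠ[𝓝 y] fun _ => φ y := by
  obtain ⟨ε, hε, hball⟩ := Metric.eventually_nhds_iff_ball.1 h
  filter_upwards [ball_mem_nhds y hε] with z hz
  exact isOpen_ball.is_const_of_deriv_eq_zero (convex_ball y ε).isPreconnected
    (fun x hx => (hball x hx).differentiableAt.differentiableWithinAt)
    (fun x hx => (hball x hx).deriv) hz (mem_ball_self hε)

/-- Where `f τ ∈ S`, `φ` is locally constant near `f τ`, so `φ ∘ f` is locally constant near `τ`
whether or not `f` is differentiable there. -/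
theorem hasDerivAt_comp_of_deriv_eventually_zero {S : Set ℝ} {φ φ' f : ℝ → ℝ} {g : ℝ} {τ : ℝ}
    (hφ : ∀ y, HasDerivAt φ (φ' y) y) (hφ'S : ∀ y ∈ S, φ' =ᶠ[𝓝 y] 0) (hf : ContinuousAt f τ)
    (hderiv : f τ ∉ S → HasDerivAt f g τ) : HasDerivAt (φ ∘ f) (φ' (f τ) * g) τ := by
  by_cases hτ : f τ ∈ S
  · have hφ'τ : φ' (f τ) = 0 := (hφ'S _ hτ).self_of_nhds
    have hconst : φ =ᶠ[𝓝 (f τ)] fun _ => φ (f τ) :=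
      eventuallyEq_const_of_eventually_hasDerivAt_zero <|
        (hφ'S _ hτ).mono fun z hz => (hφ z).congr_deriv hz
    rw [hφ'τ, zero_mul]
    exact (hasDerivAt_const τ (φ (f τ))).congr_of_eventuallyEq (hconst.comp_tendsto hf)
  · exact (hφ (f τ)).comp τ (hderiv hτ)

section Cutoff

variable (S : Set ℝ)

/-- Equal to `0` within distance `1/n` of `S` and to `1` beyond distance `2/n`. -/
noncomputable def cutoff (n : ℕ) (y : ℝ) : ℝ :=
  max 0 (min 1 (n * infDist y S - 1))

noncomputable def cutoffPrimitive (n : ℕ) (y : ℝ) : ℝ :=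
  ∫ t in (0 : ℝ)..y, cutoff S n t

variable {S}

theorem continuous_cutoff (n : ℕ) : Continuous (cutoff S n) := by
  unfold cutoff
  fun_prop

theorem cutoff_nonneg (n : ℕ) (y : ℝ) : 0 ≤ cutoff S n y :=
  le_max_left _ _

theorem cutoff_le_one (n : ℕ) (y : ℝ) : cutoff S n y ≤ 1 :=
  max_le zero_le_one (min_le_left _ _)

theorem cutoff_eventuallyEq_zero (n : ℕ) {y : ℝ} (hy : y ∈ S) : cutoff S n =ᶠ[𝓝 y] 0 := by
  have hcont : ContinuousAt (fun z => (n : ℝ) * infDist z S - 1) y := by fun_prop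
  have hneg : (n : ℝ) * infDist y S - 1 < 0 := by simp [infDist_zero_of_mem hy]
  filter_upwards [hcont.eventually_lt continuousAt_const hneg] with z hz
  exact max_eq_left ((min_le_right _ _).trans hz.le)

theorem tendsto_cutoff {y : ℝ} (hy : 0 < infDist y S) :
    Tendsto (fun n => cutoff S n y) atTop (𝓝 1) := by
  have hlarge : ∀ᶠ n : ℕ in atTop, 2 ≤ (n : ℝ) * infDist y S :=
    (tendsto_natCast_atTop_atTop.atTop_mul_const hy).eventually_ge_atTop 2
  refine tendsto_const_nhds.congr' (hlarge.mono fun n hn => (?_ : cutoff S n y = 1).symm)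
  rw [cutoff, min_eq_left (by linarith), max_eq_right zero_le_one]

theorem hasDerivAt_cutoffPrimitive (n : ℕ) (y : ℝ) :
    HasDerivAt (cutoffPrimitive S n) (cutoff S n y) y :=
  (continuous_cutoff n).integral_hasStrictDerivAt 0 y |>.hasDerivAt

theorem tendsto_cutoffPrimitive (hS : IsClosed S) (hS_ne : S.Nonempty) (hS₀ : volume S = 0)
    (y : ℝ) :
    Tendsto (fun n => cutoffPrimitive S n y) atTop (𝓝 y) := by
  have hae : ∀ᵐ t : ℝ, 0 < infDist t S := by
    filter_upwards [measure_eq_zero_iff_ae_notMem.1 hS₀] with t ht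
    exact (hS.notMem_iff_infDist_pos hS_ne).1 ht
  have hlim := intervalIntegral.tendsto_integral_filter_of_dominated_convergence (a := 0) (b := y)
    (fun _ => (1 : ℝ)) (Eventually.of_forall fun n => (continuous_cutoff n).aestronglyMeasurable)
    (Eventually.of_forall fun n => Eventually.of_forall fun t _ => by
      rw [norm_of_nonneg (cutoff_nonneg n t)]; exact cutoff_le_one n t)
    intervalIntegrable_const (hae.mono fun t ht _ => tendsto_cutoff ht)
  simpa [cutoffPrimitive] using hlim

end Cutoff

theorem tendsto_integral_cutoff_comp_mul {S : Set ℝ} (hS : IsClosed S) (hS_ne : S.Nonempty)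
    (hS₀ : volume S = 0) {f g : ℝ → ℝ} (hf : Continuous f) {a b : ℝ}
    (hg : IntervalIntegrable g volume a b) (hderiv : ∀ τ, f τ ∉ S → HasDerivAt f (g τ) τ) :
    Tendsto (fun n => ∫ τ in a..b, cutoff S n (f τ) * g τ) atTop (𝓝 (f b - f a)) := by
  have hftc : ∀ n : ℕ, ∫ τ in a..b, cutoff S n (f τ) * g τ =
      cutoffPrimitive S n (f b) - cutoffPrimitive S n (f a) := fun n =>
    intervalIntegral.integral_eq_sub_of_hasDerivAt
      (fun τ _ => hasDerivAt_comp_of_deriv_eventually_zero (hasDerivAt_cutoffPrimitive n)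
        (fun _ => cutoff_eventuallyEq_zero n) hf.continuousAt (hderiv τ))
      (hg.continuousOn_mul ((continuous_cutoff n).comp hf).continuousOn)
  simpa only [hftc] using
    (tendsto_cutoffPrimitive hS hS_ne hS₀ (f b)).sub (tendsto_cutoffPrimitive hS hS_ne hS₀ (f a))

section UnitWeight

variable {u g : ℝ → ℝ} {a b : ℝ}

theorem abs_integral_mul_le_integral_abs (hab : a ≤ b) (hu : Continuous u)
    (hu₀ : ∀ x, 0 ≤ u x) (hu₁ : ∀ x, u x ≤ 1) (hg : IntervalIntegrable g volume a b) :
    |∫ x in a..b, u x * g x| ≤ ∫ x in a..b, |g x| := by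
  refine (intervalIntegral.abs_integral_le_integral_abs hab).trans <|
    intervalIntegral.integral_mono_on hab (hg.continuousOn_mul hu.continuousOn).abs hg.abs
      fun x _ => ?_
  rw [abs_mul, abs_of_nonneg (hu₀ x)]
  exact mul_le_of_le_one_left (abs_nonneg _) (hu₁ x)

theorem integral_mul_mem_Icc (hab : a ≤ b) (hu : Continuous u)
    (hu₀ : ∀ x, 0 ≤ u x) (hu₁ : ∀ x, u x ≤ 1) (hg : IntervalIntegrable g volume a b)
    (hg₀ : ∀ x ∈ Ioo a b, 0 ≤ g x) :
    ∫ x in a..b, u x * g x ∈ Icc 0 (∫ x in a..b, g x) := by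
  have hug : IntervalIntegrable (fun x => u x * g x) volume a b :=
    hg.continuousOn_mul hu.continuousOn
  constructor
  · simpa using intervalIntegral.integral_mono_on_of_le_Ioo hab intervalIntegrable_const hug
      fun x hx => mul_nonneg (hu₀ x) (hg₀ x hx)
  · exact intervalIntegral.integral_mono_on_of_le_Ioo hab hug hg
      fun x hx => mul_le_of_le_one_left (hg₀ x hx) (hu₁ x)

end UnitWeight

theorem isClosed_range_intCast_mul (c : ℝ) : IsClosed (range fun k : ℤ => (k : ℝ) * c) := by
  simpa only [smul_eq_mul, mul_comm, Function.comp_def] using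
    ((isClosedMap_smul₀ c).comp Int.isClosedEmbedding_coe_real.isClosedMap).isClosed_range

/-- If `f` is continuous, `g` is continuous, and `f' = g` holds at every point where
`f(τ) ∉ πℤ`, then for `a ≤ b`: `|f(b) - f(a)| ≤ ∫_a^b |g(τ)| dτ`, and if moreover
`g ≥ 0` on `(a, b)`, then `0 ≤ f(b) - f(a) ≤ ∫_a^b g(τ) dτ`. -/
theorem integral_bounds_of_deriv_off_piZ
    (f g : ℝ → ℝ) (hf : Continuous f) (hg : Continuous g)
    (hderiv : ∀ τ : ℝ, (∀ k : ℤ, f τ ≠ k * π) → HasDerivAt f (g τ) τ) :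
    ∀ a b : ℝ, a ≤ b →
      (|f b - f a| ≤ ∫ τ in a..b, |g τ|) ∧
      ((∀ τ ∈ Set.Ioo a b, 0 ≤ g τ) →
        0 ≤ f b - f a ∧ f b - f a ≤ ∫ τ in a..b, g τ) := by
  intro a b hab
  set S : Set ℝ := range fun k : ℤ => (k : ℝ) * π
  have hlim := tendsto_integral_cutoff_comp_mul (isClosed_range_intCast_mul π) ⟨0, 0, by simp⟩
    ((countable_range _).measure_zero volume) hf (hg.intervalIntegrable a b)
    fun τ hτ => hderiv τ fun k hk => hτ ⟨k, hk.symm⟩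
  have hweight (n : ℕ) : Continuous fun τ => cutoff S n (f τ) := (continuous_cutoff n).comp hf
  refine ⟨le_of_tendsto hlim.abs (Eventually.of_forall fun n => ?_), fun hg₀ => ?_⟩
  · exact abs_integral_mul_le_integral_abs hab (hweight n) (fun _ => cutoff_nonneg n _)
      (fun _ => cutoff_le_one n _) (hg.intervalIntegrable a b)
  · exact isClosed_Icc.mem_of_tendsto hlim <| Eventually.of_forall fun n =>
      integral_mul_mem_Icc hab (hweight n) (fun _ => cutoff_nonneg n _)
        (fun _ => cutoff_le_one n _) (hg.intervalIntegrable a b) hg₀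
end

section
/- Let f, g : ℝ → ℝ with f continuous and g continuous, and suppose that at every τ ∈ ℝ with f(τ) ∉ πℤ, f is differentiable at τ with f'(τ) = g(τ). If t₀ ∈ ℝ satisfies f(t₀) ∈ πℤ and g(t₀) = 0, then f is differentiable at t₀ with f'(t₀) = 0 = g(t₀). -/
open scoped Real Topology
open Real Set Filter

/-!
Near `t₀` the only multiple of `π` that `f` can take is `f t₀ = kπ`, so off the level set
`f = kπ` we have `f' = g`, which is small near `t₀`. For `x` near `t₀`, let `s₀` be the point of
the level set between `t₀` and `x` closest to `x`; `f` is differentiable with derivative `g` on the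
open interval between `s₀` and `x`, so the mean value theorem gives
`|f x - f t₀| = |f x - f s₀| ≤ (sup |g|) |x - t₀|`, and `g t₀ = 0` makes this `o(|x - t₀|)`.
-/

lemma Int.eq_of_abs_mul_sub_mul_lt {m k : ℤ} {p : ℝ} (hp : 0 < p)
    (h : |(m : ℝ) * p - k * p| < p) : m = k := by
  rw [← sub_mul, abs_mul, abs_of_pos hp] at h
  have h1 : |((m - k : ℤ) : ℝ)| < 1 := by
    push_cast
    nlinarith
  rw [← Int.cast_abs, ← Int.cast_one, Int.cast_lt, Int.abs_lt_one_iff] at h1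
  omega

lemma exists_last_mem_Icc_of_eq {f : ℝ → ℝ} {a b c : ℝ} (hab : a ≤ b)
    (hf : ContinuousOn f (Icc a b)) (hfa : f a = c) :
    ∃ s₀ ∈ Icc a b, f s₀ = c ∧ ∀ s ∈ Ioc s₀ b, f s ≠ c := by
  have hS : IsCompact (Icc a b ∩ f ⁻¹' {c}) :=
    isCompact_Icc.of_isClosed_subset
      (hf.preimage_isClosed_of_isClosed isClosed_Icc isClosed_singleton) inter_subset_left
  obtain ⟨s₀, ⟨hs₀, hfs₀⟩, hmax⟩ := hS.exists_isGreatest ⟨a, ⟨le_rfl, hab⟩, hfa⟩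
  refine ⟨s₀, hs₀, hfs₀, fun s hs hfs => ?_⟩
  exact (hmax ⟨⟨hs₀.1.trans hs.1.le, hs.2⟩, hfs⟩).not_gt hs.1

lemma abs_sub_le_mul_of_hasDerivAt_off_level_of_left_eq {f g : ℝ → ℝ} {a b c C : ℝ}
    (hab : a ≤ b) (hf : ContinuousOn f (Icc a b)) (hfa : f a = c)
    (hderiv : ∀ s ∈ Ioo a b, f s ≠ c → HasDerivAt f (g s) s)
    (hg : ∀ s ∈ Ioo a b, |g s| ≤ C) :
    |f b - c| ≤ C * (b - a) := by
  obtain ⟨s₀, hs₀, hfs₀, hne⟩ := exists_last_mem_Icc_of_eq hab hf hfa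
  rcases hs₀.2.eq_or_lt with hs₀b | hs₀b
  · subst hs₀b
    rcases hab.eq_or_lt with rfl | hab
    · simp [hfs₀]
    · have hC : 0 ≤ C := (abs_nonneg _).trans (hg ((a + s₀) / 2) ⟨by linarith, by linarith⟩)
      simpa [hfs₀] using mul_nonneg hC (sub_nonneg.2 hab.le)
  have hsub : Ioo s₀ b ⊆ Ioo a b := Ioo_subset_Ioo_left hs₀.1
  obtain ⟨ξ, hξ, hslope⟩ := exists_hasDerivAt_eq_slope f g hs₀b
    (hf.mono (Icc_subset_Icc_left hs₀.1))
    fun s hs => hderiv s (hsub hs) (hne s (Ioo_subset_Ioc_self hs))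
  have hfb : f b - c = g ξ * (b - s₀) := by
    rw [hslope, hfs₀, div_mul_cancel₀ _ (sub_pos.2 hs₀b).ne']
  calc |f b - c| = |g ξ| * (b - s₀) := by rw [hfb, abs_mul, abs_of_pos (sub_pos.2 hs₀b)]
    _ ≤ C * (b - s₀) := by gcongr; exact hg ξ (hsub hξ)
    _ ≤ C * (b - a) := by
      gcongr
      · exact (abs_nonneg _).trans (hg ξ (hsub hξ))
      · exact hs₀.1

lemma abs_sub_le_mul_of_hasDerivAt_off_level_of_right_eq {f g : ℝ → ℝ} {a b c C : ℝ}
    (hab : a ≤ b) (hf : ContinuousOn f (Icc a b)) (hfb : f b = c)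
    (hderiv : ∀ s ∈ Ioo a b, f s ≠ c → HasDerivAt f (g s) s)
    (hg : ∀ s ∈ Ioo a b, |g s| ≤ C) :
    |f a - c| ≤ C * (b - a) := by
  have hneg : ∀ s ∈ Ioo (-b) (-a), -s ∈ Ioo a b := fun s hs =>
    ⟨by linarith [hs.2], by linarith [hs.1]⟩
  have key := abs_sub_le_mul_of_hasDerivAt_off_level_of_left_eq (f := fun s => f (-s))
    (g := fun s => -g (-s)) (neg_le_neg hab)
    (hf.comp continuousOn_neg fun s hs => ⟨by linarith [hs.2], by linarith [hs.1]⟩)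
    (by simpa using hfb)
    (fun s hs hne =>
      ((hderiv (-s) (hneg s hs) hne).comp s (hasDerivAt_neg s)).congr_deriv (mul_neg_one _))
    (fun s hs => by simpa using hg (-s) (hneg s hs))
  simpa [add_comm, sub_eq_add_neg] using key

lemma eventually_abs_sub_le_mul_abs_of_hasDerivAt_off_level {f g : ℝ → ℝ} {t c C : ℝ}
    (hf : Continuous f) (hft : f t = c)
    (h : ∀ᶠ s in 𝓝 t, (f s ≠ c → HasDerivAt f (g s) s) ∧ |g s| ≤ C) :
    ∀ᶠ x in 𝓝 t, |f x - c| ≤ C * |x - t| := by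
  obtain ⟨δ, hδ, hball⟩ := Metric.eventually_nhds_iff_ball.1 h
  filter_upwards [Metric.ball_mem_nhds t hδ] with x hx
  have hsub : uIcc t x ⊆ Metric.ball t δ :=
    (convex_ball t δ).ordConnected.uIcc_subset (Metric.mem_ball_self hδ) hx
  rcases le_total t x with htx | hxt
  · rw [uIcc_of_le htx] at hsub
    rw [abs_of_nonneg (sub_nonneg.2 htx)]
    exact abs_sub_le_mul_of_hasDerivAt_off_level_of_left_eq htx hf.continuousOn hft
      (fun s hs => (hball s (hsub (Ioo_subset_Icc_self hs))).1)
      (fun s hs => (hball s (hsub (Ioo_subset_Icc_self hs))).2)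
  · rw [uIcc_of_ge hxt] at hsub
    rw [abs_of_nonpos (sub_nonpos.2 hxt), neg_sub]
    exact abs_sub_le_mul_of_hasDerivAt_off_level_of_right_eq hxt hf.continuousOn hft
      (fun s hs => (hball s (hsub (Ioo_subset_Icc_self hs))).1)
      (fun s hs => (hball s (hsub (Ioo_subset_Icc_self hs))).2)

/-- If `f` is continuous, `g` is continuous, `f' = g` holds at every point where `f(τ) ∉ πℤ`,
and `t₀` satisfies `f(t₀) ∈ πℤ` and `g(t₀) = 0`, then `f` is differentiable at `t₀` with
`f'(t₀) = 0 = g(t₀)`. -/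
theorem hasDerivAt_zero_at_gap_edge
    (f g : ℝ → ℝ) (hf : Continuous f) (hg : Continuous g)
    (hderiv : ∀ τ : ℝ, (∀ k : ℤ, f τ ≠ k * π) → HasDerivAt f (g τ) τ)
    (t₀ : ℝ) (hft₀ : ∃ k : ℤ, f t₀ = k * π) (hgt₀ : g t₀ = 0) :
    HasDerivAt f 0 t₀ := by
  obtain ⟨k, hk⟩ := hft₀
  refine hasDerivAt_iff_isLittleO.2 (Asymptotics.isLittleO_iff.2 fun C hC => ?_)
  have hg_small : ∀ᶠ s in 𝓝 t₀, |g s| ≤ C := by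
    filter_upwards [Metric.tendsto_nhds.1 (hg.tendsto t₀) C hC] with s hs
    rw [Real.dist_eq, hgt₀, sub_zero] at hs
    exact hs.le
  have hf_near : ∀ᶠ s in 𝓝 t₀, |f s - k * π| < π := by
    simpa only [Real.dist_eq, hk] using Metric.tendsto_nhds.1 (hf.tendsto t₀) π pi_pos
  have hoff : ∀ᶠ s in 𝓝 t₀, (f s ≠ k * π → HasDerivAt f (g s) s) ∧ |g s| ≤ C := by
    filter_upwards [hf_near, hg_small] with s hfs hgs
    refine ⟨fun hne => hderiv s fun m hm => ?_, hgs⟩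
    rw [hm] at hfs hne
    exact hne (by rw [Int.eq_of_abs_mul_sub_mul_lt pi_pos hfs])
  filter_upwards [eventually_abs_sub_le_mul_abs_of_hasDerivAt_off_level hf hk hoff] with x hx
  simpa [hk] using hx
end
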